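/- arXiv:2006.10436 — 2 statements merged into one kernel-verified Lean document; each statement's English description precedes it below -/
import Mathlib

section
/- For any α, ρ > 0 and Z ∈ R^{M×N} with singular value decomposition Z = U diag(σ) Vᵀ, the matrix X̂ = U diag(max(σ − α/ρ, 0)) Vᵀ is a global minimizer of X ↦ α‖X‖_* + (ρ/2)‖X − Z‖_F², where ‖·‖_* is the nuclear norm and ‖·‖_F the Frobenius norm. -/
open Matrix Finset

noncomputable def frobSq {m n : Type*} [Fintype m] [Fintype n] (A : Matrix m n ℝ) : ℝ :=
  ∑ i, ∑ j, (A i j) ^ 2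

noncomputable def frobNorm {m n : Type*} [Fintype m] [Fintype n] (A : Matrix m n ℝ) : ℝ :=
  Real.sqrt (frobSq A)

/-- The singular values of `A` (indexed by columns; padded with zeros),
defined as square roots of the eigenvalues of `Aᵀ * A`. -/
noncomputable def svals {m n : Type*} [Fintype m] [Fintype n] [DecidableEq n]
    (A : Matrix m n ℝ) : n → ℝ :=
  fun j => Real.sqrt ((Matrix.isHermitian_conjTranspose_mul_self A).eigenvalues j)

/-- Nuclear norm: sum of singular values. -/
noncomputable def nuclearNorm {m n : Type*} [Fintype m] [Fintype n] [DecidableEq n]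
    (A : Matrix m n ℝ) : ℝ := ∑ j, svals A j

/-- Singular values sorted in nonincreasing order. -/
noncomputable def svalsDesc {M N : ℕ} (A : Matrix (Fin M) (Fin N) ℝ) : Fin N → ℝ :=
  fun i => (svals A ∘ Tuple.sort (svals A)) i.rev

/-- Truncated nuclear norm: sum of all but the `θ` largest singular values. -/
noncomputable def tnn {M N : ℕ} (θ : ℕ) (A : Matrix (Fin M) (Fin N) ℝ) : ℝ :=
  ∑ i ∈ Finset.univ.filter (fun i : Fin N => θ ≤ (i : ℕ)), svalsDesc A i

/-- Spectral norm: largest singular value. -/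
noncomputable def specNorm {m n : Type*} [Fintype m] [Fintype n] [DecidableEq n]
    (A : Matrix m n ℝ) : ℝ := ⨆ j, svals A j

/-- Rectangular diagonal matrix. -/
def rdiag {M N : ℕ} (σ : Fin (min M N) → ℝ) : Matrix (Fin M) (Fin N) ℝ :=
  fun i j => if h : (i : ℕ) = (j : ℕ) ∧ (i : ℕ) < min M N then σ ⟨i, h.2⟩ else 0


namespace SVTaux

variable {m n K : Type*} [Fintype m] [Fintype n] [Fintype K]

noncomputable def sqv (v : n → ℝ) : ℝ := ∑ i, v i ^ 2

def outer {m n : Type*} (u : m → ℝ) (w : n → ℝ) : Matrix m n ℝ := Matrix.of fun i j => u i * w j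

noncomputable def ip (A B : Matrix m n ℝ) : ℝ := ∑ i, ∑ j, A i j * B i j

lemma sqv_nonneg (v : n → ℝ) : 0 ≤ sqv v := Finset.sum_nonneg fun _ _ => sq_nonneg _
lemma sqv_eq_dot (v : n → ℝ) : sqv v = v ⬝ᵥ v := by simp [sqv, dotProduct, sq]

lemma frobSq_nonneg (A : Matrix m n ℝ) : 0 ≤ frobSq A :=
  Finset.sum_nonneg fun _ _ => Finset.sum_nonneg fun _ _ => sq_nonneg _

lemma frobSq_add (A B : Matrix m n ℝ) :
    frobSq (A + B) = frobSq A + 2 * ip A B + frobSq B := by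
  unfold frobSq ip
  rw [Finset.mul_sum, ← Finset.sum_add_distrib, ← Finset.sum_add_distrib]
  refine Finset.sum_congr rfl fun i _ => ?_
  rw [Finset.mul_sum, ← Finset.sum_add_distrib, ← Finset.sum_add_distrib]
  refine Finset.sum_congr rfl fun j _ => ?_
  simp only [Matrix.add_apply]; ring

lemma ip_smul_left (c : ℝ) (A B : Matrix m n ℝ) : ip (c • A) B = c * ip A B := by
  simp [ip, Finset.mul_sum, mul_assoc]

lemma ip_sub_right (A B C : Matrix m n ℝ) : ip A (B - C) = ip A B - ip A C := by
  simp [ip, ← Finset.sum_sub_distrib, sub_mul, mul_sub]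

lemma ip_sum_left (f : K → Matrix m n ℝ) (B : Matrix m n ℝ) :
    ip (∑ k, f k) B = ∑ k, ip (f k) B := by
  unfold ip
  have h : ∀ i, ∑ j, (∑ k, f k) i j * B i j = ∑ j, ∑ k, f k i j * B i j := fun i =>
    Finset.sum_congr rfl fun j _ => by simp [Matrix.sum_apply, Finset.sum_mul]
  simp_rw [h]
  calc ∑ i, ∑ j, ∑ k, f k i j * B i j
      = ∑ i, ∑ k, ∑ j, f k i j * B i j :=
        Finset.sum_congr rfl fun i _ => Finset.sum_comm
    _ = ∑ k, ∑ i, ∑ j, f k i j * B i j := Finset.sum_comm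

lemma ip_sum_right (A : Matrix m n ℝ) (f : K → Matrix m n ℝ) :
    ip A (∑ k, f k) = ∑ k, ip A (f k) := by
  unfold ip
  have h : ∀ i, ∑ j, A i j * (∑ k, f k) i j = ∑ j, ∑ k, A i j * f k i j := fun i =>
    Finset.sum_congr rfl fun j _ => by simp [Matrix.sum_apply, Finset.mul_sum]
  simp_rw [h]
  calc ∑ i, ∑ j, ∑ k, A i j * f k i j
      = ∑ i, ∑ k, ∑ j, A i j * f k i j :=
        Finset.sum_congr rfl fun i _ => Finset.sum_comm
    _ = ∑ k, ∑ i, ∑ j, A i j * f k i j := Finset.sum_comm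

lemma ip_smul_right (c : ℝ) (A B : Matrix m n ℝ) : ip A (c • B) = c * ip A B := by
  unfold ip; rw [Finset.mul_sum]
  refine Finset.sum_congr rfl fun i _ => ?_
  rw [Finset.mul_sum]
  refine Finset.sum_congr rfl fun j _ => ?_
  simp only [Matrix.smul_apply, smul_eq_mul]; ring

lemma ip_outer (G : Matrix m n ℝ) (u : m → ℝ) (w : n → ℝ) :
    ip G (outer u w) = u ⬝ᵥ (G *ᵥ w) := by
  simp only [ip, outer, Matrix.of_apply, dotProduct, mulVec, Finset.mul_sum]
  refine Finset.sum_congr rfl fun i _ => ?_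
  refine Finset.sum_congr rfl fun j _ => ?_
  ring

lemma ip_outer_outer (a : m → ℝ) (b : n → ℝ) (c : m → ℝ) (d : n → ℝ) :
    ip (outer a b) (outer c d) = (a ⬝ᵥ c) * (b ⬝ᵥ d) := by
  unfold ip outer dotProduct
  rw [Finset.sum_mul]
  refine Finset.sum_congr rfl fun i _ => ?_
  rw [Finset.mul_sum]
  refine Finset.sum_congr rfl fun j _ => ?_
  simp only [Matrix.of_apply]; ring

lemma outer_mulVec (u : m → ℝ) (w : n → ℝ) (v : n → ℝ) :
    (outer u w) *ᵥ v = (w ⬝ᵥ v) • u := by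
  funext i
  simp only [outer, mulVec, dotProduct, Matrix.of_apply, Pi.smul_apply, smul_eq_mul,
    Finset.sum_mul]
  exact Finset.sum_congr rfl fun j _ => by ring

lemma outer_smul_left (c : ℝ) (u : m → ℝ) (w : n → ℝ) :
    outer (c • u) w = c • outer u w := by
  ext i j; simp [outer, mul_assoc]

lemma sum_smul_mulVec (g : K → ℝ) (f : K → Matrix m n ℝ) (v : n → ℝ) :
    (∑ k, g k • f k) *ᵥ v = ∑ k, g k • (f k *ᵥ v) := by
  funext i
  simp only [mulVec, dotProduct, Finset.sum_apply, Matrix.sum_apply, Matrix.smul_apply,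
    Pi.smul_apply, smul_eq_mul, Finset.sum_mul, Finset.mul_sum, mul_assoc]
  exact Finset.sum_comm

lemma dot_mulVec_mulVec (A : Matrix m n ℝ) (u v : n → ℝ) :
    (A *ᵥ u) ⬝ᵥ (A *ᵥ v) = u ⬝ᵥ ((Aᵀ * A) *ᵥ v) := by
  rw [← vecMul_transpose, dotProduct_mulVec, vecMul_vecMul, ← dotProduct_mulVec]

lemma col_dot_col {O : Matrix n n ℝ} [DecidableEq n] (h : Oᵀ * O = 1) (i j : n) :
    (fun a => O a i) ⬝ᵥ (fun a => O a j) = if i = j then 1 else 0 := by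
  have := congrFun (congrFun h i) j
  simpa [Matrix.mul_apply, dotProduct, Matrix.one_apply, transpose_apply] using this

lemma bessel_eq {O : Matrix n n ℝ} [DecidableEq n] (h : Oᵀ * O = 1) (v : n → ℝ) :
    ∑ j, ((fun a => O a j) ⬝ᵥ v) ^ 2 = sqv v := by
  have hOO : O * Oᵀ = 1 := mul_eq_one_comm.mp h
  have h1 : ∀ j, ((fun a => O a j) ⬝ᵥ v) = (Oᵀ *ᵥ v) j := by
    intro j; simp [mulVec, dotProduct, transpose_apply]
  simp_rw [h1]
  have h2 : sqv (Oᵀ *ᵥ v) = v ⬝ᵥ ((Oᵀᵀ * Oᵀ) *ᵥ v) := by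
    rw [sqv_eq_dot]; exact dot_mulVec_mulVec Oᵀ v v
  rw [show (∑ j, ((Oᵀ *ᵥ v) j) ^ 2) = sqv (Oᵀ *ᵥ v) from rfl, h2, transpose_transpose,
    hOO, one_mulVec, sqv_eq_dot]

lemma sum_dot (f : K → m → ℝ) (w : m → ℝ) : (∑ k, f k) ⬝ᵥ w = ∑ k, f k ⬝ᵥ w := by
  simp only [dotProduct, Finset.sum_apply, Finset.sum_mul]
  exact Finset.sum_comm

lemma dot_sum (w : m → ℝ) (f : K → m → ℝ) : w ⬝ᵥ (∑ k, f k) = ∑ k, w ⬝ᵥ f k := by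
  simp only [dotProduct, Finset.sum_apply, Finset.mul_sum]
  exact Finset.sum_comm

lemma sqv_sum_smul (p : K → m → ℝ) (c : K → ℝ)
    (hp : ∀ i j, i ≠ j → p i ⬝ᵥ p j = 0) :
    sqv (∑ k, c k • p k) = ∑ k, c k ^ 2 * sqv (p k) := by
  rw [sqv_eq_dot]
  rw [sum_dot]
  refine Finset.sum_congr rfl fun k _ => ?_
  rw [dot_sum]
  rw [Finset.sum_eq_single k]
  · rw [smul_dotProduct, dotProduct_smul, sqv_eq_dot]; simp [smul_eq_mul]; ring
  · intro l _ hl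
    rw [smul_dotProduct, dotProduct_smul, hp k l (Ne.symm hl)]; simp
  · simp

lemma op_bound (p : K → m → ℝ) (q : K → n → ℝ) (g : K → ℝ) (c : ℝ)
    (hp : ∀ i j, i ≠ j → p i ⬝ᵥ p j = 0) (hp1 : ∀ k, sqv (p k) ≤ 1)
    (hq : ∀ v, ∑ k, (q k ⬝ᵥ v) ^ 2 ≤ sqv v)
    (hg : ∀ k, |g k| ≤ c) (v : n → ℝ) :
    sqv ((∑ k, g k • outer (p k) (q k)) *ᵥ v) ≤ c ^ 2 * sqv v := by
  have hmv : (∑ k, g k • outer (p k) (q k)) *ᵥ v = ∑ k, (g k * (q k ⬝ᵥ v)) • p k := by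
    rw [sum_smul_mulVec]
    refine Finset.sum_congr rfl fun k _ => ?_
    rw [outer_mulVec, smul_smul]
  rw [hmv, sqv_sum_smul _ _ hp]
  have step1 : ∀ k ∈ Finset.univ (α := K),
      (g k * (q k ⬝ᵥ v)) ^ 2 * sqv (p k) ≤ c ^ 2 * (q k ⬝ᵥ v) ^ 2 := by
    intro k _
    have h1 : g k ^ 2 ≤ c ^ 2 := by
      have := pow_le_pow_left₀ (abs_nonneg (g k)) (hg k) 2
      rwa [sq_abs] at this
    nlinarith [sq_nonneg (g k * (q k ⬝ᵥ v)), hp1 k, sqv_nonneg (p k), sq_nonneg (q k ⬝ᵥ v)]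
  calc ∑ k, (g k * (q k ⬝ᵥ v)) ^ 2 * sqv (p k)
      ≤ ∑ k, c ^ 2 * (q k ⬝ᵥ v) ^ 2 := Finset.sum_le_sum step1
    _ = c ^ 2 * ∑ k, (q k ⬝ᵥ v) ^ 2 := by rw [Finset.mul_sum]
    _ ≤ c ^ 2 * sqv v := by nlinarith [hq v, sq_nonneg c]

lemma dot_le {u v : m → ℝ} {a b : ℝ} (ha : 0 ≤ a) (hb : 0 ≤ b)
    (h1 : sqv u ≤ a ^ 2) (h2 : sqv v ≤ b ^ 2) : u ⬝ᵥ v ≤ a * b := by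
  have hcs := Finset.sum_mul_sq_le_sq_mul_sq Finset.univ u v
  have h3 : (u ⬝ᵥ v) ^ 2 ≤ (a * b) ^ 2 := by
    calc (u ⬝ᵥ v) ^ 2 ≤ sqv u * sqv v := hcs
      _ ≤ a ^ 2 * b ^ 2 := by
          have := sqv_nonneg u; have := sqv_nonneg v; nlinarith
      _ = (a * b) ^ 2 := by ring
  nlinarith [mul_nonneg ha hb]

lemma ip_le (G : Matrix m n ℝ) (c : ℝ) (hc : 0 ≤ c)
    (hG : ∀ v, sqv (G *ᵥ v) ≤ c ^ 2 * sqv v)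
    (s : K → ℝ) (u : K → m → ℝ) (w : K → n → ℝ)
    (hs : ∀ k, 0 ≤ s k) (hu : ∀ k, sqv (u k) ≤ 1) (hw : ∀ k, sqv (w k) ≤ 1) :
    ip G (∑ k, s k • outer (u k) (w k)) ≤ c * ∑ k, s k := by
  rw [ip_sum_right, Finset.mul_sum]
  refine Finset.sum_le_sum fun k _ => ?_
  rw [ip_smul_right, ip_outer]
  have hd : u k ⬝ᵥ (G *ᵥ w k) ≤ 1 * c := by
    refine dot_le zero_le_one hc ?_ ?_
    · simpa using hu k
    · calc sqv (G *ᵥ w k) ≤ c ^ 2 * sqv (w k) := hG (w k)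
        _ ≤ c ^ 2 := by nlinarith [sq_nonneg c, hw k, sqv_nonneg (w k)]
  rw [one_mul] at hd
  calc s k * (u k ⬝ᵥ (G *ᵥ w k)) ≤ s k * c := mul_le_mul_of_nonneg_left hd (hs k)
    _ = c * s k := mul_comm _ _

lemma svals_nonneg [DecidableEq n] (A : Matrix m n ℝ) (j : n) : 0 ≤ svals A j :=
  Real.sqrt_nonneg _

lemma svd_exists [DecidableEq n] (A : Matrix m n ℝ) :
    ∃ (p : n → m → ℝ) (q : n → n → ℝ),
      A = ∑ j, svals A j • outer (p j) (q j) ∧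
      (∀ i j, i ≠ j → p i ⬝ᵥ p j = 0) ∧ (∀ j, sqv (p j) ≤ 1) ∧
      (∀ i j, q i ⬝ᵥ q j = if i = j then 1 else 0) ∧
      (∀ v, ∑ j, (q j ⬝ᵥ v) ^ 2 = sqv v) ∧
      (∀ j, svals A j ≠ 0 → sqv (p j) = 1) := by
  classical
  have h : (Aᴴ * A).IsHermitian := Matrix.isHermitian_conjTranspose_mul_self A
  set W : Matrix n n ℝ := (h.eigenvectorUnitary : Matrix n n ℝ) with hWdef
  have hWW : Wᵀ * W = 1 := by
    have := Matrix.mem_unitaryGroup_iff'.mp h.eigenvectorUnitary.2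
    rwa [Matrix.star_eq_conjTranspose, Matrix.conjTranspose_eq_transpose_of_trivial] at this
  set q : n → n → ℝ := fun j => fun i => W i j with hqdef
  have hAH : Aᴴ = Aᵀ := Matrix.conjTranspose_eq_transpose_of_trivial A
  have hqdot : ∀ i j, q i ⬝ᵥ q j = if i = j then 1 else 0 := fun i j => col_dot_col hWW i j
  have heig : ∀ j, (Aᵀ * A) *ᵥ q j = h.eigenvalues j • q j := by
    intro j
    have h2 := h.mulVec_eigenvectorBasis j
    have hqj : q j = ⇑(h.eigenvectorBasis j) := by
      funext i
      exact Matrix.IsHermitian.eigenvectorUnitary_apply h i j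
    rw [hqj, ← hAH]
    exact h2
  have hlam : ∀ j, 0 ≤ h.eigenvalues j := fun j =>
    Matrix.eigenvalues_conjTranspose_mul_self_nonneg A j
  have hssq : ∀ j, svals A j ^ 2 = h.eigenvalues j := fun j => Real.sq_sqrt (hlam j)
  have hdotAq : ∀ i j, (A *ᵥ q i) ⬝ᵥ (A *ᵥ q j)
      = h.eigenvalues j * (if i = j then 1 else 0) := by
    intro i j
    rw [dot_mulVec_mulVec, heig j, dotProduct_smul, smul_eq_mul, hqdot i j]
  set p : n → m → ℝ := fun j => if svals A j = 0 then 0 else (svals A j)⁻¹ • (A *ᵥ q j)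
    with hpdef
  have hAq0 : ∀ j, svals A j = 0 → A *ᵥ q j = 0 := by
    intro j hj
    have hl0 : h.eigenvalues j = 0 := by
      have := hssq j; rw [hj] at this; simpa using this.symm
    have hd : sqv (A *ᵥ q j) = 0 := by
      rw [sqv_eq_dot, hdotAq j j, hl0]; simp
    funext i
    have := (Finset.sum_eq_zero_iff_of_nonneg (fun i _ => sq_nonneg ((A *ᵥ q j) i))).mp hd
      i (Finset.mem_univ i)
    exact pow_eq_zero_iff (n := 2) (by norm_num) |>.mp this
  have hApq : ∀ j, A *ᵥ q j = svals A j • p j := by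
    intro j
    by_cases hj : svals A j = 0
    · rw [hAq0 j hj, hj, zero_smul]
    · rw [hpdef]; simp only [if_neg hj]
      rw [smul_smul, mul_inv_cancel₀ hj, one_smul]
  refine ⟨p, q, ?_, ?_, ?_, hqdot, fun v => bessel_eq hWW v, ?_⟩
  · -- decomposition
    have hWWT : W * Wᵀ = 1 := mul_eq_one_comm.mp hWW
    have h1 : ∀ j, svals A j • outer (p j) (q j) = outer (A *ᵥ q j) (q j) := by
      intro j
      rw [hApq j, ← outer_smul_left]
    have h2 : A = ∑ j, outer (A *ᵥ q j) (q j) := by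
      ext i b
      rw [Matrix.sum_apply]
      simp only [outer, Matrix.of_apply, mulVec, dotProduct]
      calc A i b = ∑ k, A i k * (1 : Matrix n n ℝ) k b := by
              simp [Matrix.one_apply]
        _ = ∑ k, A i k * ∑ j, W k j * W b j := by
              refine Finset.sum_congr rfl fun k _ => ?_
              congr 1
              rw [← hWWT]; simp [Matrix.mul_apply, transpose_apply]
        _ = ∑ k, ∑ j, A i k * (W k j * W b j) := by
              refine Finset.sum_congr rfl fun k _ => ?_
              rw [Finset.mul_sum]
        _ = ∑ j, ∑ k, A i k * (W k j * W b j) := Finset.sum_comm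
        _ = ∑ j, (∑ k, A i k * q j k) * q j b := by
              refine Finset.sum_congr rfl fun j _ => ?_
              rw [Finset.sum_mul]
              refine Finset.sum_congr rfl fun k _ => ?_
              show A i k * (W k j * W b j) = A i k * W k j * W b j
              ring
    conv_lhs => rw [h2]
    exact Finset.sum_congr rfl fun j _ => (h1 j).symm
  · -- p orthogonality
    intro i j hij
    rw [hpdef]
    by_cases hi : svals A i = 0
    · simp [hi]
    · by_cases hj : svals A j = 0
      · simp [hi, hj]
      · simp only [if_neg hi, if_neg hj]
        rw [smul_dotProduct, dotProduct_smul, hdotAq i j, if_neg hij]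
        simp
  · -- sqv (p j) ≤ 1
    intro j
    by_cases hj : svals A j = 0
    · rw [hpdef]; simp [hj, sqv]
    · have : sqv (p j) = 1 := by
        rw [hpdef]; simp only [if_neg hj]
        rw [sqv_eq_dot, smul_dotProduct, dotProduct_smul, hdotAq j j, if_pos rfl, ← hssq j]
        simp only [smul_eq_mul]; field_simp
      rw [this]
  · -- sqv (p j) = 1 when svals ≠ 0
    intro j hj
    rw [hpdef]; simp only [if_neg hj]
    rw [sqv_eq_dot, smul_dotProduct, dotProduct_smul, hdotAq j j, if_pos rfl, ← hssq j]
    simp only [smul_eq_mul]; field_simp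

lemma nuclearNorm_le [DecidableEq n] (A : Matrix m n ℝ) (s : K → ℝ)
    (u : K → m → ℝ) (w : K → n → ℝ)
    (hs : ∀ k, 0 ≤ s k) (hu : ∀ k, sqv (u k) ≤ 1) (hw : ∀ k, sqv (w k) ≤ 1)
    (hA : A = ∑ k, s k • outer (u k) (w k)) :
    nuclearNorm A ≤ ∑ k, s k := by
  obtain ⟨p, q, hdec, hporth, hp1, hqdot, hqsum, hpnorm⟩ := svd_exists A
  set G : Matrix m n ℝ := ∑ j, outer (p j) (q j) with hGdef
  have hop : ∀ v, sqv (G *ᵥ v) ≤ 1 ^ 2 * sqv v := by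
    intro v
    have h0 := op_bound p q (fun _ => 1) 1 hporth hp1
      (fun v => le_of_eq (hqsum v)) (fun k => by norm_num) v
    have hsimp : (∑ k, (1 : ℝ) • outer (p k) (q k)) = G := by
      rw [hGdef]; exact Finset.sum_congr rfl fun k _ => one_smul _ _
    rwa [hsimp] at h0
  have hipA : ip G A = nuclearNorm A := by
    conv_lhs => rw [hdec]
    rw [ip_sum_right]
    have hterm : ∀ j, ip G (svals A j • outer (p j) (q j)) = svals A j := by
      intro j
      rw [ip_smul_right, hGdef, ip_sum_left]
      have h3 : ∀ i, ip (outer (p i) (q i)) (outer (p j) (q j))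
          = (p i ⬝ᵥ p j) * (if i = j then 1 else 0) := fun i => by
        rw [ip_outer_outer, hqdot]
      simp_rw [h3]
      rw [Finset.sum_eq_single j]
      · by_cases hj : svals A j = 0
        · rw [hj]; ring
        · have := hpnorm j hj
          rw [sqv_eq_dot] at this
          rw [this]; simp
      · intro i _ hij; rw [if_neg hij]; ring
      · intro hc; exact absurd (Finset.mem_univ j) hc
    simp_rw [hterm]
    rfl
  have h2 : ip G A ≤ 1 * ∑ k, s k := by
    rw [hA]
    exact ip_le G 1 zero_le_one hop s u w hs hu hw
  rw [one_mul] at h2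
  rw [← hipA]
  exact h2

lemma ip_two_sums [DecidableEq K] (u : K → m → ℝ) (w : K → n → ℝ) (a b : K → ℝ)
    (hu : ∀ i j, u i ⬝ᵥ u j = if i = j then 1 else 0)
    (hw : ∀ i j, w i ⬝ᵥ w j = if i = j then 1 else 0) :
    ip (∑ k, a k • outer (u k) (w k)) (∑ k, b k • outer (u k) (w k)) = ∑ k, a k * b k := by
  rw [ip_sum_left]
  refine Finset.sum_congr rfl fun k _ => ?_
  rw [ip_smul_left, ip_sum_right]
  have h1 : ∀ l, ip (outer (u k) (w k)) (b l • outer (u l) (w l))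
      = b l * ((if k = l then (1:ℝ) else 0) * (if k = l then (1:ℝ) else 0)) := by
    intro l
    rw [ip_smul_right, ip_outer_outer, hu, hw]
  simp_rw [h1]
  rw [Finset.sum_eq_single k]
  · simp
  · intro l _ hl; rw [if_neg (Ne.symm hl)]; ring
  · intro hc; exact absurd (Finset.mem_univ k) hc

lemma sum_smul_sub (O : K → Matrix m n ℝ) (a b : K → ℝ) :
    (∑ k, a k • O k) - (∑ k, b k • O k) = ∑ k, (a k - b k) • O k := by
  rw [← Finset.sum_sub_distrib]
  exact Finset.sum_congr rfl fun k _ => (sub_smul _ _ _).symm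

lemma mul_sum_smul_mul {m' n' : Type*} [Fintype m'] [Fintype n']
    (P : Matrix m' m ℝ) (Q : Matrix n n' ℝ) (c : K → ℝ) (O : K → Matrix m n ℝ) :
    P * (∑ k, c k • O k) * Q = ∑ k, c k • (P * O k * Q) := by
  rw [Matrix.mul_sum, Matrix.sum_mul]
  refine Finset.sum_congr rfl fun k _ => ?_
  rw [Matrix.mul_smul, Matrix.smul_mul]

lemma mul_outer_mul {m' n' : Type*} [Fintype m'] [Fintype n']
    (P : Matrix m' m ℝ) (x : m → ℝ) (y : n → ℝ) (Q : Matrix n n' ℝ) :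
    P * outer x y * Q = outer (P *ᵥ x) (y ᵥ* Q) := by
  ext a b
  simp only [Matrix.mul_apply, outer, Matrix.of_apply, mulVec, vecMul, dotProduct]
  calc ∑ l, (∑ k, P a k * (x k * y l)) * Q l b
      = ∑ l, ∑ k, P a k * x k * (y l * Q l b) := by
        refine Finset.sum_congr rfl fun l _ => ?_
        rw [Finset.sum_mul]
        refine Finset.sum_congr rfl fun k _ => by ring
    _ = ∑ k, ∑ l, P a k * x k * (y l * Q l b) := Finset.sum_comm
    _ = ∑ k, (P a k * x k) * ∑ l, y l * Q l b := by
        refine Finset.sum_congr rfl fun k _ => (Finset.mul_sum _ _ _).symm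
    _ = (∑ k, P a k * x k) * ∑ l, y l * Q l b := (Finset.sum_mul _ _ _).symm

end SVTaux

/-- singular value thresholding is the proximal operator of the nuclear norm. -/
theorem svt_global_minimizer {M N : ℕ} (α ρ : ℝ) (hα : 0 < α) (hρ : 0 < ρ)
    (Z : Matrix (Fin M) (Fin N) ℝ)
    (U : Matrix (Fin M) (Fin M) ℝ) (V : Matrix (Fin N) (Fin N) ℝ)
    (σ : Fin (min M N) → ℝ)
    (hU : Uᵀ * U = 1) (hV : Vᵀ * V = 1)
    (hσ0 : ∀ i, 0 ≤ σ i) (hσd : Antitone σ)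
    (hZ : Z = U * rdiag σ * Vᵀ) :
    ∀ X : Matrix (Fin M) (Fin N) ℝ,
      α * nuclearNorm (U * rdiag (fun i => max (σ i - α / ρ) 0) * Vᵀ) +
          ρ / 2 * frobSq (U * rdiag (fun i => max (σ i - α / ρ) 0) * Vᵀ - Z) ≤
        α * nuclearNorm X + ρ / 2 * frobSq (X - Z) := by
  classical
  intro X
  have hρ' : ρ ≠ 0 := ne_of_gt hρ
  set shat : Fin (min M N) → ℝ := fun i => max (σ i - α / ρ) 0 with hshatdef
  set g : Fin (min M N) → ℝ := fun i => ρ * (σ i - shat i) with hgdef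
  set e1 : Fin (min M N) → Fin M := Fin.castLE (min_le_left M N) with he1
  set e2 : Fin (min M N) → Fin N := Fin.castLE (min_le_right M N) with he2
  set ucol : Fin (min M N) → Fin M → ℝ := fun i => fun a => U a (e1 i) with hucol
  set vcol : Fin (min M N) → Fin N → ℝ := fun i => fun b => V b (e2 i) with hvcol
  -- column orthonormality
  have hudot : ∀ i j, ucol i ⬝ᵥ ucol j = if i = j then 1 else 0 := by
    intro i j
    have := SVTaux.col_dot_col hU (e1 i) (e1 j)
    simpa [hucol, he1, Fin.castLE_inj] using this
  have hvdot : ∀ i j, vcol i ⬝ᵥ vcol j = if i = j then 1 else 0 := by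
    intro i j
    have := SVTaux.col_dot_col hV (e2 i) (e2 j)
    simpa [hvcol, he2, Fin.castLE_inj] using this
  have husqv : ∀ i, SVTaux.sqv (ucol i) ≤ 1 := by
    intro i
    rw [SVTaux.sqv_eq_dot, hudot i i, if_pos rfl]
  have hvsqv : ∀ i, SVTaux.sqv (vcol i) ≤ 1 := by
    intro i
    rw [SVTaux.sqv_eq_dot, hvdot i i, if_pos rfl]
  have huorth : ∀ i j, i ≠ j → ucol i ⬝ᵥ ucol j = 0 := by
    intro i j hij; rw [hudot, if_neg hij]
  -- Bessel for the selected columns of V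
  have hvbessel : ∀ v : Fin N → ℝ, ∑ i, (vcol i ⬝ᵥ v) ^ 2 ≤ SVTaux.sqv v := by
    intro v
    have hfull := SVTaux.bessel_eq hV v
    have hinj : Function.Injective e2 := Fin.castLE_injective _
    calc ∑ i, (vcol i ⬝ᵥ v) ^ 2
        = ∑ j ∈ Finset.univ.image e2, ((fun a => V a j) ⬝ᵥ v) ^ 2 := by
          rw [Finset.sum_image (fun a _ b _ h => hinj h)]
      _ ≤ ∑ j, ((fun a => V a j) ⬝ᵥ v) ^ 2 :=
          Finset.sum_le_sum_of_subset_of_nonneg (Finset.subset_univ _)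
            (fun j _ _ => sq_nonneg _)
      _ = SVTaux.sqv v := hfull
  -- rectangular diagonal decomposition
  have hdecomp : ∀ s : Fin (min M N) → ℝ,
      U * rdiag s * Vᵀ = ∑ i, s i • SVTaux.outer (ucol i) (vcol i) := by
    intro s
    have hr : rdiag s = ∑ i, s i •
        SVTaux.outer (Pi.single (e1 i) (1:ℝ)) (Pi.single (e2 i) (1:ℝ)) := by
      ext a b
      rw [Matrix.sum_apply]
      simp only [SVTaux.outer, Matrix.smul_apply, Matrix.of_apply, smul_eq_mul]
      by_cases hab : (a : ℕ) = (b : ℕ) ∧ (a : ℕ) < min M N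
      · have hlt := hab.2
        rw [Finset.sum_eq_single ⟨(a : ℕ), hlt⟩]
        · have ha : a = e1 ⟨(a : ℕ), hlt⟩ := by
            apply Fin.ext; simp [he1]
          have hb : b = e2 ⟨(a : ℕ), hlt⟩ := by
            apply Fin.ext; simp [he2, ← hab.1]
          rw [rdiag, dif_pos hab, ← ha, ← hb]
          simp
        · intro i _ hi
          rcases eq_or_ne a (e1 i) with hai | hai
          · exfalso
            apply hi
            apply Fin.ext
            have : (a : ℕ) = (i : ℕ) := by rw [hai]; simp [he1]
            simp [← this]
          · rw [Pi.single_eq_of_ne hai]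
            ring
        · intro hc; exact absurd (Finset.mem_univ _) hc
      · rw [rdiag, dif_neg hab]
        refine (Finset.sum_eq_zero fun i _ => ?_).symm
        rcases eq_or_ne a (e1 i) with hai | hai
        · rcases eq_or_ne b (e2 i) with hbi | hbi
          · exfalso
            apply hab
            have h1 : (a : ℕ) = (i : ℕ) := by rw [hai]; simp [he1]
            have h2 : (b : ℕ) = (i : ℕ) := by rw [hbi]; simp [he2]
            exact ⟨by rw [h1, h2], by rw [h1]; exact i.2⟩
          · rw [Pi.single_eq_of_ne hbi]; ring
        · rw [Pi.single_eq_of_ne hai]; ring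
    rw [hr, SVTaux.mul_sum_smul_mul]
    refine Finset.sum_congr rfl fun i _ => ?_
    have hx : U *ᵥ Pi.single (e1 i) (1:ℝ) = ucol i := by
      funext a; simp [Matrix.mulVec_single, hucol]
    have hy : (Pi.single (e2 i) (1:ℝ)) ᵥ* Vᵀ = vcol i := by
      rw [vecMul_transpose]; funext b; simp [Matrix.mulVec_single, hvcol]
    rw [SVTaux.mul_outer_mul, hx, hy]
  -- set up the candidate and certificate
  set Xhat : Matrix (Fin M) (Fin N) ℝ := U * rdiag shat * Vᵀ with hXhatdef
  have hXhat : Xhat = ∑ i, shat i • SVTaux.outer (ucol i) (vcol i) := hdecomp shat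
  have hZ2 : Z = ∑ i, σ i • SVTaux.outer (ucol i) (vcol i) := by rw [hZ]; exact hdecomp σ
  set G : Matrix (Fin M) (Fin N) ℝ := ∑ i, g i • SVTaux.outer (ucol i) (vcol i) with hGdef2
  have hshat0 : ∀ i, 0 ≤ shat i := fun i => le_max_right _ _
  have hgabs : ∀ i, |g i| ≤ α := by
    intro i
    rcases le_or_gt (σ i) (α / ρ) with hcase | hcase
    · have hm : shat i = 0 := max_eq_right (by simp [hshatdef]; linarith)
      have hgi : g i = ρ * σ i := by rw [hgdef]; simp [hm]
      rw [hgi, abs_of_nonneg (mul_nonneg hρ.le (hσ0 i))]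
      have := (le_div_iff₀ hρ).mp hcase
      nlinarith
    · have hm : shat i = σ i - α / ρ := max_eq_left (sub_nonneg.mpr hcase.le)
      have hgi : g i = α := by rw [hgdef]; simp only [hm]; field_simp; ring
      rw [hgi, abs_of_nonneg hα.le]
  have hgs : ∀ i, g i * shat i = α * shat i := by
    intro i
    rcases le_or_gt (σ i) (α / ρ) with hcase | hcase
    · have hm : shat i = 0 := max_eq_right (by simp [hshatdef]; linarith)
      rw [hm]; ring
    · have hm : shat i = σ i - α / ρ := max_eq_left (sub_nonneg.mpr hcase.le)
      have hgi : g i = α := by rw [hgdef]; simp only [hm]; field_simp; ring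
      rw [hgi]
  have hGop : ∀ v, SVTaux.sqv (G *ᵥ v) ≤ α ^ 2 * SVTaux.sqv v := fun v =>
    SVTaux.op_bound ucol vcol g α huorth husqv hvbessel hgabs v
  have hGX : ∀ Y : Matrix (Fin M) (Fin N) ℝ, SVTaux.ip G Y ≤ α * nuclearNorm Y := by
    intro Y
    obtain ⟨p, q, hdec, hporth, hp1, hqdot, hqsum, hpnorm⟩ := SVTaux.svd_exists Y
    have hq1 : ∀ j, SVTaux.sqv (q j) ≤ 1 := fun j => by
      rw [SVTaux.sqv_eq_dot, hqdot j j, if_pos rfl]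
    calc SVTaux.ip G Y = SVTaux.ip G (∑ j, svals Y j • SVTaux.outer (p j) (q j)) := by
          rw [← hdec]
      _ ≤ α * ∑ j, svals Y j :=
          SVTaux.ip_le G α hα.le hGop _ p q (fun j => SVTaux.svals_nonneg Y j) hp1 hq1
      _ = α * nuclearNorm Y := rfl
  have hGXhat : SVTaux.ip G Xhat = α * ∑ i, shat i := by
    rw [hXhat, hGdef2, SVTaux.ip_two_sums ucol vcol g shat hudot hvdot, Finset.mul_sum]
    exact Finset.sum_congr rfl fun i _ => hgs i
  have hNXhat : nuclearNorm Xhat ≤ ∑ i, shat i :=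
    SVTaux.nuclearNorm_le Xhat shat ucol vcol hshat0 husqv hvsqv hXhat
  have hexp : frobSq (X - Z) = frobSq (Xhat - Z) + 2 * SVTaux.ip (Xhat - Z) (X - Xhat)
      + frobSq (X - Xhat) := by
    rw [show X - Z = (Xhat - Z) + (X - Xhat) by abel]
    exact SVTaux.frobSq_add _ _
  have hXZG : Xhat - Z = (-(ρ⁻¹)) • G := by
    have h1 : Z - Xhat = ρ⁻¹ • G := by
      rw [hZ2, hXhat, SVTaux.sum_smul_sub, hGdef2, Finset.smul_sum]
      refine Finset.sum_congr rfl fun i _ => ?_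
      rw [smul_smul, hgdef]
      congr 1
      field_simp
    calc Xhat - Z = -(Z - Xhat) := by abel
      _ = (-(ρ⁻¹)) • G := by rw [h1, neg_smul]
  have hiple : SVTaux.ip (Xhat - Z) (X - Xhat)
      = (-(ρ⁻¹)) * (SVTaux.ip G X - SVTaux.ip G Xhat) := by
    rw [hXZG, SVTaux.ip_smul_left, SVTaux.ip_sub_right]
  have hfs := SVTaux.frobSq_nonneg (X - Xhat)
  have h1 := hGX X
  have h2 : α * nuclearNorm Xhat ≤ SVTaux.ip G Xhat := by
    rw [hGXhat]
    exact mul_le_mul_of_nonneg_left hNXhat hα.le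
  have h3 : 0 ≤ ρ / 2 * frobSq (X - Xhat) := mul_nonneg (by linarith) hfs
  have key : ρ / 2 * frobSq (X - Z) = ρ / 2 * frobSq (Xhat - Z)
      - (SVTaux.ip G X - SVTaux.ip G Xhat) + ρ / 2 * frobSq (X - Xhat) := by
    rw [hexp, hiple]
    field_simp
    ring
  rw [key]
  linarith
end

section
/- The truncated nuclear norm can be expressed as ‖X‖_{θ,*} = ‖X‖_* − max_{A,B} tr(A X Bᵀ), where the maximum is over A ∈ R^{θ×M}, B ∈ R^{θ×N} with A Aᵀ = I_θ and B Bᵀ = I_θ. -/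
open Matrix Finset

/- ====================  auxiliary lemmas  ==================== -/

lemma aux_trace_mul_transpose_self_nonneg {k l : Type*} [Fintype k] [Fintype l]
    (M : Matrix k l ℝ) : 0 ≤ (M * Mᵀ).trace := by
  rw [Matrix.trace]
  apply Finset.sum_nonneg
  intro i _
  rw [Matrix.diag_apply, Matrix.mul_apply]
  exact Finset.sum_nonneg fun j _ => by simpa using mul_self_nonneg (M i j)

lemma aux_trace_mul_transpose_self {k l : Type*} [Fintype k] [Fintype l]
    (M : Matrix k l ℝ) : (M * Mᵀ).trace = ∑ i, ∑ j, (M i j) ^ 2 := by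
  rw [Matrix.trace]
  apply Finset.sum_congr rfl
  intro i _
  rw [Matrix.diag_apply, Matrix.mul_apply]
  apply Finset.sum_congr rfl
  intro j _
  rw [Matrix.transpose_apply]; ring

lemma aux_sum_filter_lt {N θ : ℕ} (hθN : θ ≤ N) (f : Fin N → ℝ) :
    ∑ i ∈ Finset.univ.filter (fun i : Fin N => (i : ℕ) < θ), f i
      = ∑ k : Fin θ, f (Fin.castLE hθN k) := by
  have himg : Finset.univ.filter (fun i : Fin N => (i : ℕ) < θ)
      = Finset.image (Fin.castLE hθN) Finset.univ := by
    ext i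
    simp only [Finset.mem_filter, Finset.mem_univ, true_and, Finset.mem_image]
    constructor
    · intro hi; exact ⟨⟨(i : ℕ), hi⟩, by ext; rfl⟩
    · rintro ⟨k, rfl⟩; exact k.2
  rw [himg, Finset.sum_image (fun a _ b _ h => Fin.castLE_injective hθN h)]

/-- diagonal entries of a symmetric idempotent are at most `1`. -/
lemma aux_proj_diag_le_one {n : Type*} [Fintype n] [DecidableEq n]
    {R : Matrix n n ℝ} (hsym : Rᵀ = R) (hidem : R * R = R) (j : n) :
    R j j ≤ 1 := by
  have h1 : R j j = ∑ l, (R j l) ^ 2 := by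
    conv_lhs => rw [← hidem]
    rw [Matrix.mul_apply]
    congr 1; ext l
    have hlj : R j l = R l j := congrFun (congrFun hsym l) j
    rw [← hlj]; ring
  have h2 : (R j j) ^ 2 ≤ R j j := by
    conv_rhs => rw [h1]
    exact Finset.single_le_sum (f := fun l => (R j l) ^ 2)
      (fun l _ => sq_nonneg _) (Finset.mem_univ j)
  nlinarith [h2]

/-- `‖A v‖² ≤ ‖v‖²` for a matrix with orthonormal rows. -/
lemma aux_contraction {k m : Type*} [Fintype k] [Fintype m] [DecidableEq k]
    {A : Matrix k m ℝ} (hA : A * Aᵀ = 1) (w : m → ℝ) :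
    ∑ i, ((A *ᵥ w) i) ^ 2 ≤ ∑ j, (w j) ^ 2 := by
  set z := (Aᵀ * A) *ᵥ w with hz
  have hPsym : (Aᵀ * A)ᵀ = Aᵀ * A := by
    rw [Matrix.transpose_mul, Matrix.transpose_transpose]
  have hproj : (Aᵀ * A) * (Aᵀ * A) = Aᵀ * A := by
    rw [Matrix.mul_assoc, ← Matrix.mul_assoc A, hA, Matrix.one_mul]
  have hyz : (A *ᵥ w) ⬝ᵥ (A *ᵥ w) = w ⬝ᵥ z := by
    rw [Matrix.dotProduct_mulVec, ← Matrix.mulVec_transpose, Matrix.mulVec_mulVec, hz,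
      dotProduct_comm]
  have hzz : z ⬝ᵥ z = w ⬝ᵥ z := by
    conv_lhs => rw [hz, Matrix.dotProduct_mulVec, ← Matrix.mulVec_transpose,
      Matrix.mulVec_mulVec, hPsym, hproj]
    rw [dotProduct_comm, hz]
  have hcs : (w ⬝ᵥ z) ^ 2 ≤ (w ⬝ᵥ w) * (z ⬝ᵥ z) := by
    have := Finset.sum_mul_sq_le_sq_mul_sq Finset.univ w z
    simp only [dotProduct]
    calc (∑ i, w i * z i) ^ 2 ≤ (∑ i, w i ^ 2) * ∑ i, z i ^ 2 := this
    _ = (∑ i, w i * w i) * ∑ i, z i * z i := by simp [pow_two]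
  have hznn : 0 ≤ z ⬝ᵥ z := by
    rw [dotProduct]
    exact Finset.sum_nonneg fun i _ => mul_self_nonneg _
  have hwnn : 0 ≤ w ⬝ᵥ w := by
    rw [dotProduct]
    exact Finset.sum_nonneg fun i _ => mul_self_nonneg _
  have hle : w ⬝ᵥ z ≤ w ⬝ᵥ w := by
    rw [hzz] at hcs hznn
    rcases eq_or_lt_of_le hznn with h | h
    · rw [← h]; exact hwnn
    · nlinarith [hcs, h]
  calc ∑ i, ((A *ᵥ w) i) ^ 2 = (A *ᵥ w) ⬝ᵥ (A *ᵥ w) := by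
        simp [dotProduct, pow_two]
  _ = w ⬝ᵥ z := hyz
  _ ≤ w ⬝ᵥ w := hle
  _ = ∑ j, (w j) ^ 2 := by simp [dotProduct, pow_two]

/-- trace bound by projection. -/
lemma aux_trace_proj_le {k m : Type*} [Fintype k] [Fintype m] [DecidableEq m]
    (A : Matrix k m ℝ) {G : Matrix m m ℝ} (hsym : Gᵀ = G) (hidem : G * G = G) :
    (A * G * Aᵀ).trace ≤ (A * Aᵀ).trace := by
  have h1 : (1 - G)ᵀ = 1 - G := by rw [Matrix.transpose_sub, Matrix.transpose_one, hsym]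
  have h2 : (1 - G) * (1 - G) = 1 - G := by
    rw [Matrix.sub_mul, Matrix.mul_sub, Matrix.mul_sub, hidem]
    simp
  have key : (A * (1 - G)) * (A * (1 - G))ᵀ = A * Aᵀ - A * G * Aᵀ := by
    rw [Matrix.transpose_mul, h1, Matrix.mul_assoc, ← Matrix.mul_assoc (1 - G), h2,
      Matrix.sub_mul, Matrix.one_mul, Matrix.mul_sub, ← Matrix.mul_assoc]
  have h0 := aux_trace_mul_transpose_self_nonneg (A * (1 - G))
  rw [key, Matrix.trace_sub] at h0
  linarith

/-- variational characterization of the truncated nuclear norm: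
`‖X‖_{θ,*} = ‖X‖_* − max { tr(A X Bᵀ) : A Aᵀ = I_θ, B Bᵀ = I_θ }`. -/
theorem tnn_variational {M N : ℕ} (θ : ℕ) (hθ : θ ≤ min M N)
    (X : Matrix (Fin M) (Fin N) ℝ) :
    IsGreatest
      {c : ℝ | ∃ (A : Matrix (Fin θ) (Fin M) ℝ) (B : Matrix (Fin θ) (Fin N) ℝ),
        A * Aᵀ = 1 ∧ B * Bᵀ = 1 ∧ c = (A * X * Bᵀ).trace}
      (nuclearNorm X - tnn θ X) := by
  classical
  have hθM : θ ≤ M := hθ.trans (min_le_left _ _)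
  have hθN : θ ≤ N := hθ.trans (min_le_right _ _)
  -- spectral setup
  have hH := Matrix.isHermitian_conjTranspose_mul_self X
  set μ : Fin N → ℝ := hH.eigenvalues with hμdef
  set V : Matrix (Fin N) (Fin N) ℝ :=
    (Matrix.IsHermitian.eigenvectorUnitary hH : Matrix (Fin N) (Fin N) ℝ) with hVdef
  have hVct : Vᴴ = Vᵀ := by ext i j; simp [Matrix.conjTranspose_apply]
  have hVl : Vᵀ * V = 1 := by
    rw [← hVct]
    exact Matrix.mem_unitaryGroup_iff'.mp (Matrix.IsHermitian.eigenvectorUnitary hH).2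
  have hVr : V * Vᵀ = 1 := by
    rw [← hVct]
    exact Matrix.mem_unitaryGroup_iff.mp (Matrix.IsHermitian.eigenvectorUnitary hH).2
  have hspec : Xᵀ * X = V * Matrix.diagonal μ * Vᵀ := by
    rw [← hVct]
    simpa [hVdef, hμdef, Matrix.star_eq_conjTranspose] using hH.spectral_theorem
  set W : Matrix (Fin M) (Fin N) ℝ := X * V with hWdef
  have hWW : Wᵀ * W = Matrix.diagonal μ := by
    rw [hWdef, Matrix.transpose_mul, Matrix.mul_assoc, ← Matrix.mul_assoc Xᵀ, hspec]
    rw [Matrix.mul_assoc, Matrix.mul_assoc, hVl, Matrix.mul_one, ← Matrix.mul_assoc, hVl,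
      Matrix.one_mul]
  have hXWV : X = W * Vᵀ := by rw [hWdef, Matrix.mul_assoc, hVr, Matrix.mul_one]
  have hμnn : ∀ j, 0 ≤ μ j := fun j =>
    (Matrix.posSemidef_conjTranspose_mul_self X).eigenvalues_nonneg j
  have hsv : ∀ j, svals X j = Real.sqrt (μ j) := fun j => rfl
  have hsvnn : ∀ j, 0 ≤ svals X j := fun j => Real.sqrt_nonneg _
  have hWcol : ∀ j, ∑ m, (W m j) ^ 2 = μ j := by
    intro j
    have := congrFun (congrFun hWW j) j
    rw [Matrix.mul_apply] at this
    simp only [Matrix.diagonal_apply_eq, Matrix.transpose_apply] at this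
    rw [← this]
    exact Finset.sum_congr rfl fun m _ => by ring
  have hWcol' : ∀ j j', j ≠ j' → ∑ m, W m j * W m j' = 0 := by
    intro j j' hne
    have := congrFun (congrFun hWW j) j'
    rw [Matrix.mul_apply, Matrix.diagonal_apply_ne _ hne] at this
    simp only [Matrix.transpose_apply] at this
    exact this
  -- sorting
  set τ : Equiv.Perm (Fin N) := Tuple.sort (svals X) with hτdef
  have hdesc : ∀ i : Fin N, svalsDesc X i = svals X (τ i.rev) := fun i => rfl
  have hanti : ∀ i i' : Fin N, i ≤ i' → svalsDesc X i' ≤ svalsDesc X i := by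
    intro i i' h
    exact Tuple.monotone_sort (svals X) (Fin.rev_le_rev.mpr h)
  have hdescnn : ∀ i, 0 ≤ svalsDesc X i := fun i => hsvnn _
  set e : Fin N ≃ Fin N := (Fin.revPerm (n := N)).trans τ with hedef
  have he : ∀ i, svalsDesc X i = svals X (e i) := fun i => rfl
  -- the target value
  have hval : nuclearNorm X - tnn θ X
      = ∑ i ∈ Finset.univ.filter (fun i : Fin N => (i : ℕ) < θ), svalsDesc X i := by
    have h1 : nuclearNorm X = ∑ i, svalsDesc X i := by
      rw [nuclearNorm, ← Equiv.sum_comp e (svals X)]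
      exact Finset.sum_congr rfl fun i _ => (he i).symm
    have h2 := Finset.sum_filter_add_sum_filter_not Finset.univ
      (fun i : Fin N => θ ≤ (i : ℕ)) (svalsDesc X)
    rw [tnn, h1, ← h2]
    have h3 : Finset.univ.filter (fun i : Fin N => ¬ θ ≤ (i : ℕ))
        = Finset.univ.filter (fun i : Fin N => (i : ℕ) < θ) := by
      congr 1; ext i; rw [not_le]
    rw [h3]; ring
  rw [hval]
  constructor
  · -- membership
    set j : Fin θ → Fin N := fun k => e (Fin.castLE hθN k) with hjdef
    have hjinj : Function.Injective j := fun a b h =>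
      Fin.castLE_injective hθN (e.injective h)
    have hσ : ∀ k : Fin θ, svalsDesc X (Fin.castLE hθN k) = Real.sqrt (μ (j k)) :=
      fun k => rfl
    set B : Matrix (Fin θ) (Fin N) ℝ := fun k n => V n (j k) with hBdef
    have hBB : B * Bᵀ = 1 := by
      ext k k'
      have h := congrFun (congrFun hVl (j k)) (j k')
      rw [Matrix.mul_apply] at h
      simp only [Matrix.transpose_apply] at h
      rw [Matrix.mul_apply]
      simp only [Matrix.transpose_apply]; simp only [hBdef]
      rw [h]
      by_cases hkk : k = k'
      · subst hkk; simp [Matrix.one_apply]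
      · rw [Matrix.one_apply_ne (fun hc => hkk (hjinj hc)), Matrix.one_apply_ne hkk]
    set u : Fin M → EuclideanSpace ℝ (Fin M) := fun i =>
      if h : (i : ℕ) < θ then
        WithLp.toLp 2 (fun m => W m (j ⟨(i : ℕ), h⟩) * (Real.sqrt (μ (j ⟨(i : ℕ), h⟩)))⁻¹)
      else 0 with hudef
    set s : Set (Fin M) := {i | ∃ h : (i : ℕ) < θ, 0 < μ (j ⟨(i : ℕ), h⟩)} with hsdef
    have hON : Orthonormal ℝ (s.restrict u) := by
      rw [orthonormal_iff_ite]
      rintro ⟨i, h1, h2⟩ ⟨i', h1', h2'⟩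
      have hui : u i = fun m => W m (j ⟨(i : ℕ), h1⟩) * (Real.sqrt (μ (j ⟨(i : ℕ), h1⟩)))⁻¹ := by
        rw [hudef]; exact congrArg WithLp.ofLp (dif_pos h1)
      have hui' : u i' = fun m => W m (j ⟨(i' : ℕ), h1'⟩) * (Real.sqrt (μ (j ⟨(i' : ℕ), h1'⟩)))⁻¹ := by
        rw [hudef]; exact congrArg WithLp.ofLp (dif_pos h1')
      rw [real_inner_comm]
      simp only [Set.restrict_apply, PiLp.inner_apply, RCLike.inner_apply, conj_trivial]
      erw [hui, hui']
      by_cases hii : i = i'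
      · subst hii
        rw [if_pos rfl]
        have : ∀ m : Fin M, W m (j ⟨(i : ℕ), h1⟩) * (Real.sqrt (μ (j ⟨(i : ℕ), h1⟩)))⁻¹ *
            (W m (j ⟨(i : ℕ), h1'⟩) * (Real.sqrt (μ (j ⟨(i : ℕ), h1'⟩)))⁻¹)
            = (W m (j ⟨(i : ℕ), h1⟩))^2 * ((Real.sqrt (μ (j ⟨(i : ℕ), h1⟩)))⁻¹)^2 := by
          intro m; ring
        rw [Finset.sum_congr rfl fun m _ => this m, ← Finset.sum_mul, hWcol,
          ← Real.sqrt_inv, Real.sq_sqrt (inv_nonneg.mpr (hμnn _)),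
          mul_inv_cancel₀ (ne_of_gt h2)]
      · have hne : j ⟨(i : ℕ), h1⟩ ≠ j ⟨(i' : ℕ), h1'⟩ := by
          intro hc
          have h3 : ((⟨(i : ℕ), h1⟩ : Fin θ) : ℕ) = ((⟨(i' : ℕ), h1'⟩ : Fin θ) : ℕ) :=
            congrArg Fin.val (hjinj hc)
          exact hii (Fin.val_injective h3)
        have : ∀ m : Fin M, W m (j ⟨(i : ℕ), h1⟩) * (Real.sqrt (μ (j ⟨(i : ℕ), h1⟩)))⁻¹ *
            (W m (j ⟨(i' : ℕ), h1'⟩) * (Real.sqrt (μ (j ⟨(i' : ℕ), h1'⟩)))⁻¹)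
            = W m (j ⟨(i : ℕ), h1⟩) * W m (j ⟨(i' : ℕ), h1'⟩) *
              ((Real.sqrt (μ (j ⟨(i : ℕ), h1⟩)))⁻¹ * (Real.sqrt (μ (j ⟨(i' : ℕ), h1'⟩)))⁻¹) := by
          intro m; ring
        rw [Finset.sum_congr rfl fun m _ => this m, ← Finset.sum_mul, hWcol' _ _ hne,
          zero_mul, if_neg (by simp [Subtype.mk.injEq]; exact fun hc => absurd hc hii)]
    obtain ⟨b, hb⟩ := hON.exists_orthonormalBasis_extension_of_card_eq
      (by simp)
    set A : Matrix (Fin θ) (Fin M) ℝ := fun k m => b (Fin.castLE hθM k) m with hAdef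
    have hAA : A * Aᵀ = 1 := by
      ext k k'
      have horth := orthonormal_iff_ite.mp b.orthonormal (Fin.castLE hθM k) (Fin.castLE hθM k')
      rw [real_inner_comm] at horth
      simp only [PiLp.inner_apply, RCLike.inner_apply, conj_trivial] at horth
      rw [Matrix.mul_apply]
      simp only [Matrix.transpose_apply]; simp only [hAdef]
      rw [horth]
      by_cases hkk : k = k'
      · subst hkk; simp [Matrix.one_apply]
      · rw [if_neg (fun hc => hkk (Fin.castLE_injective hθM hc)), Matrix.one_apply_ne hkk]
    refine ⟨A, B, hAA, hBB, ?_⟩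
    have htr : (A * X * Bᵀ).trace = ∑ k : Fin θ, svalsDesc X (Fin.castLE hθN k) := by
      rw [Matrix.trace]
      apply Finset.sum_congr rfl
      intro k _
      rw [Matrix.diag_apply, Matrix.mul_apply]
      have hswap : ∑ n, (A * X) k n * Bᵀ n k = ∑ m, A k m * W m (j k) := by
        simp only [Matrix.mul_apply, Matrix.transpose_apply]; simp only [hBdef]
        simp_rw [Finset.sum_mul]
        rw [Finset.sum_comm]
        apply Finset.sum_congr rfl
        intro m _
        rw [hWdef, Matrix.mul_apply, Finset.mul_sum]
        apply Finset.sum_congr rfl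
        intro n _
        ring
      rw [hswap, hσ k]
      rcases (hμnn (j k)).lt_or_eq with hpos | hzero
      · -- positive singular value
        have hmem : (Fin.castLE hθM k) ∈ s := ⟨k.2, hpos⟩
        have hbk : (b (Fin.castLE hθM k) : EuclideanSpace ℝ (Fin M)) = u (Fin.castLE hθM k) :=
          hb _ hmem
        have huk : u (Fin.castLE hθM k)
            = fun m => W m (j k) * (Real.sqrt (μ (j k)))⁻¹ :=
          congrArg WithLp.ofLp (dif_pos k.2 : u (Fin.castLE hθM k)
            = WithLp.toLp 2 (fun m => W m (j k) * (Real.sqrt (μ (j k)))⁻¹))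
        have hAk : ∀ m, A k m = W m (j k) * (Real.sqrt (μ (j k)))⁻¹ := by
          intro m
          show b (Fin.castLE hθM k) m = _
          rw [hbk, huk]
        rw [Finset.sum_congr rfl fun m _ => by rw [hAk m]]
        have : ∀ m : Fin M, W m (j k) * (Real.sqrt (μ (j k)))⁻¹ * W m (j k)
            = (W m (j k))^2 * (Real.sqrt (μ (j k)))⁻¹ := by intro m; ring
        rw [Finset.sum_congr rfl fun m _ => this m, ← Finset.sum_mul, hWcol]
        have ht : Real.sqrt (μ (j k)) * Real.sqrt (μ (j k)) = μ (j k) :=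
          Real.mul_self_sqrt (hμnn _)
        have hs0 : Real.sqrt (μ (j k)) ≠ 0 := ne_of_gt (Real.sqrt_pos.mpr hpos)
        field_simp
        rw [Real.sq_sqrt (hμnn _)]
      · -- zero singular value
        have hW0 : ∀ m, W m (j k) = 0 := by
          intro m
          have h0 : ∑ m, (W m (j k))^2 = 0 := by rw [hWcol, ← hzero]
          have := (Finset.sum_eq_zero_iff_of_nonneg (fun m _ => sq_nonneg (W m (j k)))).mp h0
            m (Finset.mem_univ m)
          exact pow_eq_zero_iff (n := 2) (by norm_num) |>.mp this
        rw [Finset.sum_congr rfl fun m _ => by rw [hW0 m, mul_zero], Finset.sum_const_zero,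
          ← hzero, Real.sqrt_zero]
    rw [htr, aux_sum_filter_lt hθN]
  · -- upper bound
    rintro c ⟨A, B, hA, hB, rfl⟩
    set P : Matrix (Fin θ) (Fin N) ℝ := A * W with hPdef
    set Q : Matrix (Fin θ) (Fin N) ℝ := B * V with hQdef
    have hQQ : Q * Qᵀ = 1 := by
      rw [hQdef, Matrix.transpose_mul, Matrix.mul_assoc, ← Matrix.mul_assoc V, hVr,
        Matrix.one_mul, hB]
    have hfact : A * X * Bᵀ = P * Qᵀ := by
      rw [hPdef, hQdef, Matrix.transpose_mul]
      rw [hXWV]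
      simp only [Matrix.mul_assoc]
    have htr : (A * X * Bᵀ).trace = ∑ jj, ∑ k, P k jj * Q k jj := by
      rw [hfact, Matrix.trace]
      simp only [Matrix.diag_apply, Matrix.mul_apply, Matrix.transpose_apply]
      exact Finset.sum_comm
    set pn : Fin N → ℝ := fun jj => ∑ k, (P k jj) ^ 2 with hpndef
    set qn : Fin N → ℝ := fun jj => ∑ k, (Q k jj) ^ 2 with hqndef
    have hpnn : ∀ jj, 0 ≤ pn jj := fun jj => Finset.sum_nonneg fun k _ => sq_nonneg _
    have hqnn : ∀ jj, 0 ≤ qn jj := fun jj => Finset.sum_nonneg fun k _ => sq_nonneg _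
    -- column norms of Q are at most 1
    have hqn1 : ∀ jj, qn jj ≤ 1 := by
      intro jj
      have hsym : (Qᵀ * Q)ᵀ = Qᵀ * Q := by
        rw [Matrix.transpose_mul, Matrix.transpose_transpose]
      have hidem : (Qᵀ * Q) * (Qᵀ * Q) = Qᵀ * Q := by
        rw [Matrix.mul_assoc, ← Matrix.mul_assoc Q, hQQ, Matrix.one_mul]
      have hdiag : (Qᵀ * Q) jj jj = qn jj := by
        rw [Matrix.mul_apply]
        apply Finset.sum_congr rfl
        intro k _
        rw [Matrix.transpose_apply]; ring
      rw [← hdiag]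
      exact aux_proj_diag_le_one hsym hidem jj
    -- column norms of P are at most the singular values
    have hpn : ∀ jj, pn jj ≤ μ jj := by
      intro jj
      have h1 : pn jj = ∑ k, ((A *ᵥ (fun m => W m jj)) k) ^ 2 := by
        apply Finset.sum_congr rfl
        intro k _
        congr 1
      rw [h1, ← hWcol jj]
      exact aux_contraction hA _
    -- total: Σ qn = θ
    have hqsum : ∑ jj, qn jj = (θ : ℝ) := by
      have h1 : ∑ jj, qn jj = (Q * Qᵀ).trace := by
        rw [aux_trace_mul_transpose_self, Finset.sum_comm]
      rw [h1, hQQ, Matrix.trace_one, Fintype.card_fin]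
    -- weighted sum of pn
    set sif : Fin N → ℝ := fun jj => if 0 < μ jj then (Real.sqrt (μ jj))⁻¹ else 0 with hsifdef
    have hsif : ∀ jj, 0 < μ jj → (sif jj) ^ 2 = (μ jj)⁻¹ := by
      intro jj hp
      rw [hsifdef]
      simp only [if_pos hp]
      rw [← Real.sqrt_inv, Real.sq_sqrt (inv_nonneg.mpr (hμnn jj))]
    have hpsum : ∑ jj, pn jj * (sif jj) ^ 2 ≤ (θ : ℝ) := by
      set Usub : Matrix (Fin M) (Fin N) ℝ := fun m jj => W m jj * sif jj with hUdef
      set ind : Fin N → ℝ := fun jj => if 0 < μ jj then 1 else 0 with hinddef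
      have hUU : Usubᵀ * Usub = Matrix.diagonal ind := by
        ext jj jj'
        rw [Matrix.mul_apply]
        simp only [Matrix.transpose_apply]; simp only [hUdef]
        have hfac : ∀ m : Fin M, W m jj * sif jj * (W m jj' * sif jj')
            = W m jj * W m jj' * (sif jj * sif jj') := fun m => by ring
        rw [Finset.sum_congr rfl fun m _ => hfac m, ← Finset.sum_mul]
        by_cases hjj : jj = jj'
        · subst hjj
          rw [Matrix.diagonal_apply_eq]
          have hww : ∀ m : Fin M, W m jj * W m jj = (W m jj) ^ 2 := fun m => by ring
          rw [Finset.sum_congr rfl fun m _ => hww m, hWcol]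
          by_cases hp : 0 < μ jj
          · rw [show sif jj * sif jj = (sif jj) ^ 2 from (sq (sif jj)).symm, hsif jj hp,
              mul_inv_cancel₀ (ne_of_gt hp), hinddef]
            simp [if_pos hp]
          · rw [hinddef, hsifdef]
            simp [if_neg hp]
        · rw [hWcol' _ _ hjj, zero_mul, Matrix.diagonal_apply_ne _ hjj]
      have hGsym : (Usub * Usubᵀ)ᵀ = Usub * Usubᵀ := by
        rw [Matrix.transpose_mul, Matrix.transpose_transpose]
      have hUdiag : Usub * Matrix.diagonal ind = Usub := by
        ext m jj
        rw [Matrix.mul_diagonal]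
        simp only [hUdef, hinddef, hsifdef]
        by_cases hp : 0 < μ jj <;> simp [hp]
      have hGidem : (Usub * Usubᵀ) * (Usub * Usubᵀ) = Usub * Usubᵀ := by
        rw [Matrix.mul_assoc, ← Matrix.mul_assoc Usubᵀ, hUU, ← Matrix.mul_assoc, hUdiag]
      have htb := aux_trace_proj_le A hGsym hGidem
      rw [hA, Matrix.trace_one] at htb
      have hTT : A * (Usub * Usubᵀ) * Aᵀ = (A * Usub) * (A * Usub)ᵀ := by
        rw [Matrix.transpose_mul]
        simp only [Matrix.mul_assoc]
      have hT : ∀ k jj, (A * Usub) k jj = P k jj * sif jj := by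
        intro k jj
        rw [Matrix.mul_apply, hPdef, Matrix.mul_apply, Finset.sum_mul]
        apply Finset.sum_congr rfl
        intro m _
        rw [hUdef]; ring
      have htr2 : (A * (Usub * Usubᵀ) * Aᵀ).trace = ∑ jj, pn jj * (sif jj) ^ 2 := by
        rw [hTT, aux_trace_mul_transpose_self, Finset.sum_comm]
        apply Finset.sum_congr rfl
        intro jj _
        rw [hpndef, Finset.sum_mul]
        apply Finset.sum_congr rfl
        intro k _
        rw [hT k jj]; ring
      rw [htr2] at htb
      simpa using htb
    -- weights
    set t : Fin N → ℝ := fun jj => if 0 < μ jj then (pn jj * (sif jj) ^ 2 + qn jj) / 2 else 0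
      with htdef
    have ht01 : ∀ jj, 0 ≤ t jj ∧ t jj ≤ 1 := by
      intro jj
      simp only [htdef]
      by_cases hp : 0 < μ jj
      · rw [if_pos hp]
        constructor
        · exact div_nonneg (add_nonneg (mul_nonneg (hpnn jj) (sq_nonneg _)) (hqnn jj)) two_pos.le
        · have h1 : pn jj * (sif jj) ^ 2 ≤ 1 := by
            rw [hsif jj hp]
            calc pn jj * (μ jj)⁻¹ ≤ μ jj * (μ jj)⁻¹ :=
              mul_le_mul_of_nonneg_right (hpn jj) (inv_nonneg.mpr (hμnn jj))
            _ = 1 := mul_inv_cancel₀ (ne_of_gt hp)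
          linarith [hqn1 jj]
      · rw [if_neg hp]; exact ⟨le_refl 0, zero_le_one⟩
    have htsum : ∑ jj, t jj ≤ (θ : ℝ) := by
      have hle : ∀ jj, t jj ≤ (pn jj * (sif jj) ^ 2 + qn jj) / 2 := by
        intro jj
        simp only [htdef]
        by_cases hp : 0 < μ jj
        · rw [if_pos hp]
        · rw [if_neg hp]
          exact div_nonneg (add_nonneg (mul_nonneg (hpnn jj) (sq_nonneg _)) (hqnn jj)) two_pos.le
      calc ∑ jj, t jj ≤ ∑ jj, (pn jj * (sif jj) ^ 2 + qn jj) / 2 :=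
            Finset.sum_le_sum fun jj _ => hle jj
      _ = ((∑ jj, pn jj * (sif jj) ^ 2) + ∑ jj, qn jj) / 2 := by
          rw [← Finset.sum_div, Finset.sum_add_distrib]
      _ ≤ ((θ : ℝ) + (θ : ℝ)) / 2 := by
          rw [hqsum]
          linarith [hpsum]
      _ = (θ : ℝ) := by ring
    -- per-column bound
    have hterm : ∀ jj, (∑ k, P k jj * Q k jj) ≤ svals X jj * t jj := by
      intro jj
      by_cases hp : 0 < μ jj
      · have hσpos : 0 < Real.sqrt (μ jj) := Real.sqrt_pos.mpr hp
        have hσsq : Real.sqrt (μ jj) * Real.sqrt (μ jj) = μ jj := Real.mul_self_sqrt (hμnn jj)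
        have hexp : ∑ k, (P k jj - Real.sqrt (μ jj) * Q k jj) ^ 2
            = pn jj - 2 * Real.sqrt (μ jj) * (∑ k, P k jj * Q k jj) + μ jj * qn jj := by
          have hterm1 : ∀ k : Fin θ, (P k jj - Real.sqrt (μ jj) * Q k jj) ^ 2
              = (P k jj) ^ 2 - 2 * Real.sqrt (μ jj) * (P k jj * Q k jj)
                + (Real.sqrt (μ jj) * Real.sqrt (μ jj)) * (Q k jj) ^ 2 := fun k => by ring
          rw [Finset.sum_congr rfl fun k _ => hterm1 k, Finset.sum_add_distrib,
            Finset.sum_sub_distrib, ← Finset.mul_sum, ← Finset.mul_sum, hσsq]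
        have hsumsq : 0 ≤ ∑ k, (P k jj - Real.sqrt (μ jj) * Q k jj) ^ 2 :=
          Finset.sum_nonneg fun k _ => sq_nonneg _
        have h2 : 2 * Real.sqrt (μ jj) * (∑ k, P k jj * Q k jj) ≤ pn jj + μ jj * qn jj := by
          rw [hexp] at hsumsq
          linarith
        have hμne : μ jj ≠ 0 := ne_of_gt hp
        have hkey : svals X jj * t jj * (2 * Real.sqrt (μ jj)) = pn jj + μ jj * qn jj := by
          rw [hsv jj]
          simp only [htdef]
          rw [if_pos hp, hsif jj hp]
          rw [show Real.sqrt (μ jj) * ((pn jj * (μ jj)⁻¹ + qn jj) / 2) * (2 * Real.sqrt (μ jj))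
            = (Real.sqrt (μ jj) * Real.sqrt (μ jj)) * (pn jj * (μ jj)⁻¹ + qn jj) from by ring,
            hσsq]
          field_simp
        refine le_of_mul_le_mul_right ?_ (by positivity : (0 : ℝ) < 2 * Real.sqrt (μ jj))
        rw [hkey]
        linarith [h2]
      · have hμ0 : μ jj = 0 := le_antisymm (not_lt.mp hp) (hμnn jj)
        have hpn0 : ∑ k, (P k jj) ^ 2 = 0 :=
          le_antisymm (by rw [← hμ0]; exact hpn jj) (hpnn jj)
        have hP0 : ∀ k, P k jj = 0 := by
          intro k
          have h3 := (Finset.sum_eq_zero_iff_of_nonneg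
            (fun k (_ : k ∈ Finset.univ) => sq_nonneg (P k jj))).mp hpn0 k (Finset.mem_univ k)
          exact pow_eq_zero_iff (n := 2) (by norm_num) |>.mp h3
        rw [Finset.sum_congr rfl fun k _ => by rw [hP0 k, zero_mul], Finset.sum_const_zero]
        simp only [htdef]
        rw [if_neg hp, mul_zero]
    -- chain everything
    rw [htr]
    set t' : Fin N → ℝ := fun i => t (e i) with ht'def
    have hchain1 : ∑ jj, ∑ k, P k jj * Q k jj ≤ ∑ jj, svals X jj * t jj :=
      Finset.sum_le_sum fun jj _ => hterm jj
    have hre : ∑ jj, svals X jj * t jj = ∑ i, svalsDesc X i * t' i := by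
      rw [← Equiv.sum_comp e (fun jj => svals X jj * t jj)]
      apply Finset.sum_congr rfl
      intro i _
      rw [he i]
    have hre2 : ∑ i, t' i = ∑ jj, t jj := Equiv.sum_comp e t
    set sstar : ℝ := if h : θ < N then svalsDesc X ⟨θ, h⟩ else 0 with hstardef
    have hstar0 : 0 ≤ sstar := by
      rw [hstardef]
      split_ifs with h
      · exact hdescnn _
      · exact le_refl 0
    have hstar_le : ∀ i : Fin N, (i : ℕ) < θ → sstar ≤ svalsDesc X i := by
      intro i hi
      rw [hstardef]
      split_ifs with h
      · exact hanti i ⟨θ, h⟩ (Fin.le_def.mpr (by simpa using hi.le))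
      · exact hdescnn i
    have hle_star : ∀ i : Fin N, θ ≤ (i : ℕ) → svalsDesc X i ≤ sstar := by
      intro i hi
      have hθN' : θ < N := lt_of_le_of_lt hi i.2
      rw [hstardef, dif_pos hθN']
      exact hanti ⟨θ, hθN'⟩ i (Fin.le_def.mpr (by simpa using hi))
    have hstep : ∀ i : Fin N, svalsDesc X i * t' i
        ≤ max (svalsDesc X i - sstar) 0 + sstar * t' i := by
      intro i
      have h01 := ht01 (e i)
      have ht'i : t' i = t (e i) := rfl
      have hmul : (svalsDesc X i - sstar) * t' i ≤ max (svalsDesc X i - sstar) 0 := by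
        rcases le_or_gt 0 (svalsDesc X i - sstar) with hc | hc
        · calc (svalsDesc X i - sstar) * t' i ≤ (svalsDesc X i - sstar) * 1 :=
              mul_le_mul_of_nonneg_left (ht'i ▸ h01.2) hc
          _ = svalsDesc X i - sstar := mul_one _
          _ ≤ max (svalsDesc X i - sstar) 0 := le_max_left _ _
        · exact (mul_nonpos_of_nonpos_of_nonneg hc.le (ht'i ▸ h01.1)).trans (le_max_right _ _)
      have hid : svalsDesc X i * t' i = (svalsDesc X i - sstar) * t' i + sstar * t' i := by ring
      linarith [hmul, hid.le]
    have hmaxsum : ∑ i, max (svalsDesc X i - sstar) 0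
        = (∑ i ∈ Finset.univ.filter (fun i : Fin N => (i : ℕ) < θ), svalsDesc X i)
          - (θ : ℝ) * sstar := by
      rw [← Finset.sum_filter_add_sum_filter_not Finset.univ (fun i : Fin N => (i : ℕ) < θ)
        (fun i => max (svalsDesc X i - sstar) 0)]
      have hpart1 : ∑ i ∈ Finset.univ.filter (fun i : Fin N => (i : ℕ) < θ),
          max (svalsDesc X i - sstar) 0
          = ∑ i ∈ Finset.univ.filter (fun i : Fin N => (i : ℕ) < θ),
            (svalsDesc X i - sstar) := by
        apply Finset.sum_congr rfl
        intro i hi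
        exact max_eq_left (sub_nonneg.mpr (hstar_le i (Finset.mem_filter.mp hi).2))
      have hpart2 : ∑ i ∈ Finset.univ.filter (fun i : Fin N => ¬ (i : ℕ) < θ),
          max (svalsDesc X i - sstar) 0 = 0 := by
        apply Finset.sum_eq_zero
        intro i hi
        exact max_eq_right (sub_nonpos.mpr (hle_star i (not_lt.mp (Finset.mem_filter.mp hi).2)))
      rw [hpart1, hpart2, add_zero, Finset.sum_sub_distrib,
        aux_sum_filter_lt hθN (fun _ => sstar), Finset.sum_const, Finset.card_univ,
        Fintype.card_fin, nsmul_eq_mul]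
    calc ∑ jj, ∑ k, P k jj * Q k jj ≤ ∑ jj, svals X jj * t jj := hchain1
    _ = ∑ i, svalsDesc X i * t' i := hre
    _ ≤ ∑ i, (max (svalsDesc X i - sstar) 0 + sstar * t' i) :=
        Finset.sum_le_sum fun i _ => hstep i
    _ = (∑ i, max (svalsDesc X i - sstar) 0) + sstar * ∑ i, t' i := by
        rw [Finset.sum_add_distrib, Finset.mul_sum]
    _ ≤ (∑ i, max (svalsDesc X i - sstar) 0) + sstar * (θ : ℝ) := by
        have h4 : sstar * ∑ i, t' i ≤ sstar * (θ : ℝ) :=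
          mul_le_mul_of_nonneg_left (hre2 ▸ htsum) hstar0
        linarith [h4]
    _ = ∑ i ∈ Finset.univ.filter (fun i : Fin N => (i : ℕ) < θ), svalsDesc X i := by
        rw [hmaxsum]
        ring
end
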